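/- Let S be a finite set, p : S → ℝ, and let oY ∈ S with p(oY) ≠ 1. Then for every integer i ≥ 1, W(i, S \ {oY}, p) = (W(i, S, p) − W(i−1, S \ {oY}, p) · p(oY)) / (1 − p(oY)). (This is the paper's Equation (5): the influence of object oY can be filtered out of the stored probabilities P_{i,S^{oX}, x} to recover P_{i,S^{oX} \ {oY}, x}.) -/

import Mathlib

/-- Rank-probability polynomial: probability that exactly `i` of the objects in `S`
occur, where object `o` occurs with probability `p o`. -/
def W {α : Type*} [DecidableEq α] (i : ℕ) (S : Finset α) (p : α → ℝ) : ℝ :=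
  ∑ T ∈ S.powersetCard i, (∏ o ∈ T, p o) * ∏ o ∈ S \ T, (1 - p o)

/-! Conditioning on whether `oY` occurs gives
`W(i, S, p) = W(i, S \ {oY}, p) (1 - p oY) + W(i - 1, S \ {oY}, p) p oY` for `i ≥ 1`,
and Equation (5) is this identity solved for `W(i, S \ {oY}, p)`. -/

namespace Finset

theorem sum_powersetCard_succ_insert {α β : Type*} [DecidableEq α] [AddCommMonoid β]
    {a : α} {s : Finset α} (ha : a ∉ s) (n : ℕ) (f : Finset α → β) :
    ∑ t ∈ (insert a s).powersetCard (n + 1), f t =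
      ∑ t ∈ s.powersetCard (n + 1), f t + ∑ t ∈ s.powersetCard n, f (insert a t) := by
  rw [powersetCard_succ_insert ha, sum_union, sum_image]
  · exact insert_erase_invOn.2.injOn.mono fun t ht ↦ notMem_mono (mem_powersetCard.1 ht).1 ha
  · aesop (add simp [disjoint_left, mem_powersetCard, insert_subset_iff])

end Finset

open Finset

theorem W_succ_insert {α : Type*} [DecidableEq α] (n : ℕ) (s : Finset α) (p : α → ℝ)
    {a : α} (ha : a ∉ s) :
    W (n + 1) (insert a s) p = W (n + 1) s p * (1 - p a) + W n s p * p a := by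
  rw [W, sum_powersetCard_succ_insert ha, W, W, sum_mul, sum_mul]
  congr 1 <;> refine sum_congr rfl fun t ht ↦ ?_
  all_goals
    have hat : a ∉ t := notMem_mono (mem_powersetCard.1 ht).1 ha
  · rw [insert_sdiff_of_notMem _ hat, prod_insert (fun h ↦ ha (mem_sdiff.1 h).1)]
    ring
  · rw [prod_insert hat, insert_sdiff_insert, sdiff_insert_of_notMem ha]
    ring

/-- Equation (5): for `oY ∈ S` with `p(oY) ≠ 1` and every `i ≥ 1`,
`W(i, S \ {oY}, p) = (W(i, S, p) − W(i−1, S \ {oY}, p) · p(oY)) / (1 − p(oY))`. -/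
theorem rank_prob_adjust {α : Type*} [DecidableEq α] (S : Finset α) (p : α → ℝ)
    (oY : α) (hoY : oY ∈ S) (hp : p oY ≠ 1) (i : ℕ) (hi : 1 ≤ i) :
    W i (S.erase oY) p
      = (W i S p - W (i - 1) (S.erase oY) p * p oY) / (1 - p oY) := by
  obtain ⟨n, rfl⟩ := Nat.exists_eq_add_of_le' hi
  have hq : 1 - p oY ≠ 0 := sub_ne_zero.2 hp.symm
  rw [Nat.add_sub_cancel, ← insert_erase hoY, W_succ_insert n _ p (notMem_erase _ _),
    erase_insert (notMem_erase _ _), eq_div_iff hq]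
  ring
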